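/- arXiv:math/0405574 — 2 statements merged into one kernel-verified Lean document; each statement's English description precedes it below -/
import Mathlib

section
/- Let k ≥ 1 and n ≥ 0 be integers. For a permutation σ of {1,…,k}, let inv(σ) = #{(i,j) : 1 ≤ i < j ≤ k and σ(i) > σ(j)} be its number of inversions, and for m ≥ 0 let p_k(m) denote the number of partitions of m all of whose parts are at most k. Then Σ_{σ : inv(σ) ≤ n} p_k(n − inv(σ)) = binom(n+k−1, n), the sum being over all permutations σ of {1,…,k} with inv(σ) ≤ n. -/
open Finset

/-- inversion count -/
def invct {k : ℕ} (σ : Equiv.Perm (Fin k)) : ℕ :=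
  ((Finset.univ : Finset (Fin k × Fin k)).filter
      (fun q => q.1 < q.2 ∧ σ q.2 < σ q.1)).card

def insFun {k : ℕ} (v : Fin (k+1)) (τ : Equiv.Perm (Fin k)) : Fin (k+1) → Fin (k+1) :=
  Fin.snoc (fun i => v.rev.succAbove (τ i)) v.rev

lemma insFun_bij {k : ℕ} (v : Fin (k+1)) (τ : Equiv.Perm (Fin k)) :
    Function.Bijective (insFun v τ) := by
  rw [Fintype.bijective_iff_injective_and_card]
  refine ⟨?_, rfl⟩
  intro a b hab
  induction a using Fin.lastCases with
  | last =>
    induction b using Fin.lastCases with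
    | last => rfl
    | cast b =>
      simp [insFun, Fin.snoc_last, Fin.snoc_castSucc] at hab
  | cast a =>
    induction b using Fin.lastCases with
    | last =>
      simp [insFun, Fin.snoc_last, Fin.snoc_castSucc] at hab
    | cast b =>
      simp only [insFun, Fin.snoc_castSucc] at hab
      have := Fin.succAbove_right_injective (p := v.rev) hab
      simp only [EmbeddingLike.apply_eq_iff_eq] at this
      exact congrArg _ this

noncomputable def permInsert {k : ℕ} (v : Fin (k+1)) (τ : Equiv.Perm (Fin k)) : Equiv.Perm (Fin (k+1)) :=
  Equiv.ofBijective _ (insFun_bij v τ)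

lemma permInsert_apply_last {k : ℕ} (v : Fin (k+1)) (τ : Equiv.Perm (Fin k)) :
    permInsert v τ (Fin.last k) = v.rev := by simp [permInsert, Equiv.ofBijective_apply, insFun]

lemma permInsert_apply_castSucc {k : ℕ} (v : Fin (k+1)) (τ : Equiv.Perm (Fin k)) (i : Fin k) :
    permInsert v τ (Fin.castSucc i) = v.rev.succAbove (τ i) := by simp [permInsert, Equiv.ofBijective_apply, insFun]

lemma invct_permInsert {k : ℕ} (v : Fin (k+1)) (τ : Equiv.Perm (Fin k)) :
    invct (permInsert v τ) = v.val + invct τ := by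
  have hw : (v.rev : ℕ) = k - v.val := by
    have := v.is_lt; rw [Fin.val_rev]; omega
  unfold invct
  rw [Finset.card_filter, Finset.card_filter, ← Finset.univ_product_univ,
    Finset.sum_product]
  have hrw : ∀ a : Fin (k+1),
      (∑ b : Fin (k+1), if a < b ∧ (permInsert v τ) b < (permInsert v τ) a then 1 else 0)
      = (∑ j : Fin k, if a < Fin.castSucc j ∧ (permInsert v τ) (Fin.castSucc j) < (permInsert v τ) a then 1 else 0)
        + (if a < Fin.last k ∧ (permInsert v τ) (Fin.last k) < (permInsert v τ) a then 1 else 0) :=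
    fun a => Fin.sum_univ_castSucc _
  rw [Finset.sum_congr rfl (fun a _ => hrw a), Fin.sum_univ_castSucc]
  simp only [permInsert_apply_last, permInsert_apply_castSucc,
    Fin.castSucc_lt_castSucc_iff, Fin.succAbove_lt_succAbove_iff,
    Fin.castSucc_lt_last, true_and, lt_irrefl, false_and, if_false,
    Fin.lt_succAbove_iff_le_castSucc]
  have hlast : ∀ j : Fin k, ¬ (Fin.last k < Fin.castSucc j) := by
    intro j; exact not_lt.2 (Fin.castSucc_lt_last j).le
  simp only [hlast, false_and, if_false, Finset.sum_const_zero, add_zero]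
  rw [Finset.sum_add_distrib]
  have h2 : (∑ i : Fin k, if v.rev ≤ Fin.castSucc (τ i) then 1 else 0) = v.val := by
    rw [Equiv.sum_comp τ (fun j => if v.rev ≤ Fin.castSucc j then (1:ℕ) else 0)]
    have : ∀ j : Fin k, (if v.rev ≤ Fin.castSucc j then (1:ℕ) else 0)
        = (if (v.rev:ℕ) ≤ (j:ℕ) then 1 else 0) := by
      intro j; simp [Fin.le_def]
    rw [Finset.sum_congr rfl (fun j _ => this j),
      Fin.sum_univ_eq_sum_range (fun j => if (v.rev:ℕ) ≤ j then (1:ℕ) else 0) k]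
    rw [← Finset.card_filter]
    have : (Finset.range k).filter (fun j => (v.rev:ℕ) ≤ j) = Finset.Ico (v.rev:ℕ) k := by
      ext j; simp [Finset.mem_Ico, and_comm]
    rw [this, Nat.card_Ico, hw]
    omega
  rw [h2, ← Finset.sum_product', Finset.univ_product_univ, ← Finset.card_filter]
  exact add_comm _ _

lemma permInsert_bijective {k : ℕ} :
    Function.Bijective (fun p : Fin (k+1) × Equiv.Perm (Fin k) => permInsert p.1 p.2) := by
  rw [Fintype.bijective_iff_injective_and_card]
  constructor
  · rintro ⟨v, τ⟩ ⟨v', τ'⟩ h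
    simp only at h
    have hv : v = v' := by
      have := congrArg (fun σ : Equiv.Perm (Fin (k+1)) => σ (Fin.last k)) h
      simp only [permInsert_apply_last] at this
      exact Fin.rev_injective this
    subst hv
    have hτ : τ = τ' := by
      apply Equiv.ext; intro i
      have := congrArg (fun σ : Equiv.Perm (Fin (k+1)) => σ (Fin.castSucc i)) h
      simp only [permInsert_apply_castSucc] at this
      exact Fin.succAbove_right_injective this
    rw [hτ]
  · simp [Fintype.card_perm, Nat.factorial_succ]

lemma sum_perm_succ {k : ℕ} (g : ℕ → ℕ) :
    ∑ σ : Equiv.Perm (Fin (k+1)), g (invct σ)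
      = ∑ v : Fin (k+1), ∑ τ : Equiv.Perm (Fin k), g (v.val + invct τ) := by
  rw [← Fintype.sum_prod_type']
  exact (Fintype.sum_bijective _ permInsert_bijective _ _
    (fun p => by rw [invct_permInsert])).symm

lemma sum_perm_codes (k : ℕ) (g : ℕ → ℕ) :
    ∑ σ : Equiv.Perm (Fin k), g (invct σ)
      = ∑ c ∈ Fintype.piFinset (fun i : Fin k => Finset.range (i.val+1)), g (∑ i, c i) := by
  induction k generalizing g with
  | zero => simp [invct]
  | succ k ih =>
    rw [sum_perm_succ]
    rw [Finset.sum_congr rfl (fun v (_ : v ∈ Finset.univ) => ih (fun m => g (v.val + m)))]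
    rw [Fin.sum_univ_eq_sum_range (fun v => ∑ c ∈ Fintype.piFinset
      (fun i : Fin k => Finset.range (i.val+1)), g (v + ∑ i, c i)) (k+1)]
    rw [← Finset.sum_product']
    refine Finset.sum_nbij' (fun p => Fin.snoc p.2 p.1)
      (fun c => (c (Fin.last k), fun i => c (Fin.castSucc i))) ?_ ?_ ?_ ?_ ?_
    · rintro ⟨v, c⟩ hp
      rw [Finset.mem_product] at hp
      rw [Fintype.mem_piFinset]
      intro i
      induction i using Fin.lastCases with
      | last => simpa [Fin.snoc_last] using hp.1
      | cast i => simpa [Fin.snoc_castSucc] using (Fintype.mem_piFinset.1 hp.2) i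
    · intro c hc
      rw [Finset.mem_product]
      exact ⟨(Fintype.mem_piFinset.1 hc) (Fin.last k),
        Fintype.mem_piFinset.2 fun i => (Fintype.mem_piFinset.1 hc) (Fin.castSucc i)⟩
    · rintro ⟨v, c⟩ _
      refine Prod.ext ?_ ?_
      · simp [Fin.snoc_last]
      · funext i; simp [Fin.snoc_castSucc]
    · intro c _
      exact Fin.snoc_init_self c
    · rintro ⟨v, c⟩ _
      show g (v + ∑ i, c i) = g (∑ i : Fin (k+1), (Fin.snoc c v : Fin (k+1) → ℕ) i)
      rw [Fin.sum_univ_castSucc]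
      simp only [Fin.snoc_castSucc, Fin.snoc_last]
      rw [add_comm]

section PartitionCount

variable {k : ℕ}

/-- the multiset with `μ i` copies of `i+1` for each `i : Fin k` -/
def msOf (μ : Fin k → ℕ) : Multiset ℕ :=
  ∑ idx : Fin k, Multiset.replicate (μ idx) (idx.val + 1)

lemma count_msOf (μ : Fin k → ℕ) (i0 : Fin k) :
    Multiset.count (i0.val + 1) (msOf μ) = μ i0 := by
  rw [msOf, Multiset.count_sum']
  rw [Finset.sum_eq_single i0]
  · simp [Multiset.count_replicate]
  · intro idx _ hne
    rw [Multiset.count_replicate, if_neg]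
    intro h
    exact hne (Fin.val_injective (by omega))
  · simp

lemma mem_msOf {μ : Fin k → ℕ} {x : ℕ} (hx : x ∈ msOf μ) :
    ∃ i0 : Fin k, x = i0.val + 1 := by
  rw [msOf, Multiset.mem_sum] at hx
  obtain ⟨i0, -, hx⟩ := hx
  exact ⟨i0, (Multiset.eq_of_mem_replicate hx)⟩

lemma sum_msOf (μ : Fin k → ℕ) : (msOf μ).sum = ∑ idx : Fin k, (idx.val + 1) * μ idx := by
  rw [msOf, ← Multiset.coe_sumAddMonoidHom, map_sum]
  simp [Multiset.sum_replicate, mul_comm]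

lemma msOf_count (π : Multiset ℕ) (hpos : ∀ x ∈ π, 0 < x) (hk : ∀ x ∈ π, x ≤ k) :
    msOf (fun i : Fin k => Multiset.count (i.val + 1) π) = π := by
  ext x
  by_cases hx : ∃ i0 : Fin k, x = i0.val + 1
  · obtain ⟨i0, rfl⟩ := hx
    rw [count_msOf]
  · have hxπ : x ∉ π := by
      intro hmem
      exact hx ⟨⟨x - 1, by have := hk x hmem; have := hpos x hmem; omega⟩,
        by have := hpos x hmem; simp; omega⟩
    rw [Multiset.count_eq_zero_of_notMem hxπ, Multiset.count_eq_zero_of_notMem]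
    intro hmem
    exact hx (mem_msOf hmem)

lemma partition_card (hk : 1 ≤ k) (N m : ℕ) (hm : m ≤ N) :
    Fintype.card {π : Nat.Partition m // ∀ j ∈ π.parts, j ≤ k}
      = ((Fintype.piFinset fun _ : Fin k => Finset.range (N+1)).filter
          (fun μ : Fin k → ℕ => ∑ i, (i.val+1) * μ i = m)).card := by
  rw [Fintype.card_subtype]
  refine Finset.card_bij'
    (fun π _ => fun i : Fin k => Multiset.count (i.val + 1) π.parts)
    (fun μ hμ => ⟨msOf μ,
      fun {x} hx => by obtain ⟨i0, rfl⟩ := mem_msOf hx; omega,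
      by rw [sum_msOf]; exact (Finset.mem_filter.1 hμ).2⟩)
    ?_ ?_ ?_ ?_
  · -- forward map lands in the filter
    intro π hπ
    rw [Finset.mem_filter] at hπ ⊢
    have hπk : ∀ x ∈ π.parts, x ≤ k := hπ.2
    have hpos : ∀ x ∈ π.parts, 0 < x := fun x hx => π.parts_pos hx
    have hsum : ∑ i : Fin k, (i.val + 1) * Multiset.count (i.val + 1) π.parts = m := by
      have := sum_msOf (fun i : Fin k => Multiset.count (i.val + 1) π.parts)
      rw [msOf_count π.parts hpos hπk, π.parts_sum] at this
      exact this.symm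
    refine ⟨Fintype.mem_piFinset.2 fun i => ?_, hsum⟩
    rw [Finset.mem_range]
    have hle := Finset.single_le_sum (f := fun i : Fin k => (i.val + 1) * Multiset.count (i.val + 1) π.parts)
      (fun _ _ => Nat.zero_le _) (Finset.mem_univ i)
    rw [hsum] at hle
    have h2 : Multiset.count (i.val + 1) π.parts ≤ (i.val + 1) * Multiset.count (i.val + 1) π.parts :=
      Nat.le_mul_of_pos_left _ (by omega)
    omega
  · -- backward map lands in the partitions filter
    intro μ hμ
    rw [Finset.mem_filter]
    refine ⟨Finset.mem_univ _, ?_⟩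
    intro x hx
    obtain ⟨i0, rfl⟩ := mem_msOf hx
    exact i0.is_lt
  · -- left inverse
    intro π hπ
    rw [Finset.mem_filter] at hπ
    exact Nat.Partition.ext (msOf_count π.parts (fun x hx => π.parts_pos hx) hπ.2)
  · -- right inverse
    intro μ hμ
    funext i0
    exact count_msOf μ i0
end PartitionCount

section Tuples

variable {k : ℕ}

lemma count_msFin (a : Fin k → ℕ) (x : Fin k) :
    Multiset.count x (∑ i : Fin k, Multiset.replicate (a i) i) = a x := by
  rw [Multiset.count_sum', Finset.sum_eq_single x]
  · simp [Multiset.count_replicate]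
  · intro i _ hne
    rw [Multiset.count_replicate, if_neg hne]
  · simp

lemma msFin_count (s : Multiset (Fin k)) :
    ∑ i : Fin k, Multiset.replicate (Multiset.count i s) i = s := by
  ext x
  rw [count_msFin]

lemma card_finsetSum {β : Type*} (s : Finset β) (f : β → Multiset (Fin k)) :
    Multiset.card (∑ b ∈ s, f b) = ∑ b ∈ s, Multiset.card (f b) := by
  classical
  induction s using Finset.cons_induction with
  | empty => simp
  | cons a s ha ih => simp [Finset.sum_cons, ih]

lemma card_msFin (a : Fin k → ℕ) :
    Multiset.card (∑ i : Fin k, Multiset.replicate (a i) i) = ∑ i, a i := by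
  rw [card_finsetSum]
  simp

lemma sum_count_card (s : Multiset (Fin k)) :
    ∑ i : Fin k, Multiset.count i s = Multiset.card s := by
  conv_rhs => rw [← msFin_count s]
  rw [card_msFin]

lemma tuple_card (k n : ℕ) :
    ((Fintype.piFinset fun _ : Fin k => Finset.range (n+1)).filter
      (fun a : Fin k → ℕ => ∑ i, a i = n)).card = (k + n - 1).choose n := by
  rw [← Fintype.card_coe]
  have e : {a // a ∈ (Fintype.piFinset fun _ : Fin k => Finset.range (n+1)).filter
      (fun a : Fin k → ℕ => ∑ i, a i = n)} ≃ Sym (Fin k) n :=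
    { toFun := fun a => ⟨∑ i : Fin k, Multiset.replicate (a.1 i) i, by
        rw [card_msFin]
        exact (Finset.mem_filter.1 a.2).2⟩
      invFun := fun s => ⟨fun i => Multiset.count i s.1, by
        rw [Finset.mem_filter]
        constructor
        · rw [Fintype.mem_piFinset]
          intro i
          rw [Finset.mem_range, Nat.lt_succ_iff]
          exact le_trans (Multiset.count_le_card _ _) (le_of_eq s.2)
        · rw [sum_count_card, s.2]⟩
      left_inv := fun a => by
        apply Subtype.ext
        funext i
        exact count_msFin a.1 i
      right_inv := fun s => by
        apply Subtype.ext
        exact msFin_count s.1 }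
  rw [Fintype.card_congr e, Sym.card_sym_eq_choose, Fintype.card_fin]

end Tuples

/-- Identity (eq:ident) of Section 9.5 of Greene–Wilf:
`∑_{σ : inv(σ) ≤ n} p_k(n - inv(σ)) = C(n+k-1, n)`, where the sum is over
permutations of `{1,…,k}`, `inv(σ)` is the number of inversions of `σ`, and
`p_k(m)` is the number of partitions of `m` into parts at most `k`. -/
theorem inversions_partitions_identity
    (k : ℕ) (hk : 1 ≤ k) (n : ℕ)
    (inv : Equiv.Perm (Fin k) → ℕ)
    (hinv : ∀ σ, inv σ = ((Finset.univ : Finset (Fin k × Fin k)).filter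
      (fun q => q.1 < q.2 ∧ σ q.2 < σ q.1)).card)
    (pk : ℕ → ℕ)
    (hpk : ∀ m, pk m = Fintype.card {π : Nat.Partition m // ∀ j ∈ π.parts, j ≤ k}) :
    ∑ σ ∈ Finset.univ.filter (fun σ : Equiv.Perm (Fin k) => inv σ ≤ n),
        pk (n - inv σ)
      = (n + k - 1).choose n := by
  have hinvct : inv = invct := by
    funext σ; rw [hinv]; rfl
  subst hinvct
  set Mu := Fintype.piFinset fun _ : Fin k => Finset.range (n+1) with hMu
  -- step 2 : express the summand as a count for every σ
  have step2 : ∀ σ : Equiv.Perm (Fin k),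
      (if invct σ ≤ n then pk (n - invct σ) else 0)
        = (Mu.filter (fun μ : Fin k → ℕ => ∑ i, (i.val+1) * μ i + invct σ = n)).card := by
    intro σ
    by_cases h : invct σ ≤ n
    · rw [if_pos h, hpk, partition_card hk n _ (Nat.sub_le _ _)]
      congr 1
      apply Finset.filter_congr
      intro μ _
      omega
    · rw [if_neg h]
      rw [eq_comm, Finset.card_eq_zero]
      apply Finset.filter_false_of_mem
      intro μ _
      omega
  rw [Finset.sum_filter, Finset.sum_congr rfl (fun σ _ => step2 σ)]
  -- step 3 : reindex the permutation sum by Lehmer codes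
  rw [sum_perm_codes k (fun j =>
    (Mu.filter (fun μ : Fin k → ℕ => ∑ i, (i.val+1) * μ i + j = n)).card)]
  -- step 4 : merge into one big filtered product
  have step4 : ∑ c ∈ Fintype.piFinset (fun i : Fin k => Finset.range (i.val+1)),
      (Mu.filter (fun μ : Fin k → ℕ => ∑ i, (i.val+1) * μ i + ∑ i, c i = n)).card
      = (((Fintype.piFinset (fun i : Fin k => Finset.range (i.val+1))) ×ˢ Mu).filter
          (fun p : (Fin k → ℕ) × (Fin k → ℕ) =>
            ∑ i, (i.val+1) * p.2 i + ∑ i, p.1 i = n)).card := by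
    rw [Finset.card_filter, Finset.sum_product]
    exact Finset.sum_congr rfl fun c _ => (Finset.card_filter _ _)
  rw [step4]
  -- step 5 : divmod bijection with plain tuples
  have step5 : (((Fintype.piFinset (fun i : Fin k => Finset.range (i.val+1))) ×ˢ Mu).filter
          (fun p : (Fin k → ℕ) × (Fin k → ℕ) =>
            ∑ i, (i.val+1) * p.2 i + ∑ i, p.1 i = n)).card
      = (Mu.filter (fun a : Fin k → ℕ => ∑ i, a i = n)).card := by
    refine Finset.card_nbij'
      (fun p => fun idx : Fin k => p.1 idx + (idx.val+1) * p.2 idx)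
      (fun a => (fun idx : Fin k => a idx % (idx.val+1), fun idx : Fin k => a idx / (idx.val+1)))
      ?_ ?_ ?_ ?_
    · rintro ⟨c, μ⟩ hp
      rw [Finset.mem_coe, Finset.mem_filter, Finset.mem_product] at hp
      simp only at hp
      obtain ⟨⟨hc, hμ⟩, hsum⟩ := hp
      have hsum' : ∑ i : Fin k, (c i + (i.val+1) * μ i) = n := by
        rw [Finset.sum_add_distrib, add_comm]
        exact hsum
      rw [Finset.mem_coe, Finset.mem_filter]
      constructor
      · rw [Fintype.mem_piFinset]
        intro idx
        rw [Finset.mem_range, Nat.lt_succ_iff, ← hsum']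
        exact Finset.single_le_sum (f := fun i : Fin k => c i + (i.val+1) * μ i)
          (fun _ _ => Nat.zero_le _) (Finset.mem_univ idx)
      · exact hsum'
    · intro a ha
      rw [Finset.mem_coe, Finset.mem_filter] at ha
      obtain ⟨hamem, hasum⟩ := ha
      rw [Finset.mem_coe, Finset.mem_filter, Finset.mem_product]
      refine ⟨⟨?_, ?_⟩, ?_⟩
      · rw [Fintype.mem_piFinset]
        intro idx
        rw [Finset.mem_range]
        exact Nat.mod_lt _ (Nat.succ_pos _)
      · rw [Fintype.mem_piFinset]
        intro idx
        rw [Finset.mem_range, Nat.lt_succ_iff]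
        refine le_trans (Nat.div_le_self _ _) ?_
        have := Fintype.mem_piFinset.1 hamem idx
        rw [Finset.mem_range, Nat.lt_succ_iff] at this
        exact this
      · simp only
        rw [← Finset.sum_add_distrib]
        rw [Finset.sum_congr rfl (fun idx _ => Nat.div_add_mod (a idx) (idx.val+1))]
        exact hasum
    · rintro ⟨c, μ⟩ hp
      rw [Finset.mem_coe, Finset.mem_filter, Finset.mem_product] at hp
      simp only at hp
      obtain ⟨⟨hc, hμ⟩, hsum⟩ := hp
      have hclt : ∀ idx : Fin k, c idx < idx.val + 1 := by
        intro idx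
        have := Fintype.mem_piFinset.1 hc idx
        rwa [Finset.mem_range] at this
      refine Prod.ext ?_ ?_
      · funext idx
        simp only
        rw [Nat.add_mul_mod_self_left, Nat.mod_eq_of_lt (hclt idx)]
      · funext idx
        simp only
        rw [Nat.add_mul_div_left _ _ (Nat.succ_pos _), Nat.div_eq_of_lt (hclt idx), zero_add]
    · intro a ha
      funext idx
      simp only
      exact Nat.mod_add_div _ _
  rw [step5, hMu, tuple_card k n, Nat.add_comm k n]
end

section
/- Let F : ℕ → ℕ denote the Fibonacci numbers, F(0)=0, F(1)=1, F(n+2)=F(n+1)+F(n). Then for every n ≥ 0, the following identity holds in ℤ: 2 · Σ_{j=0}^{n−1} F(j)^2 F(2n−j) = F(2n) + F(n)^2 F(n+1) − F(n) F(n+1)^2 + F(n+1)^3 − F(2n+1). -/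
private lemma fib_pair_sum (n : ℕ) :
    (2 * ∑ j ∈ Finset.range n, (Nat.fib j : ℤ) ^ 2 * (Nat.fib (2 * n - j) : ℤ)
      = (Nat.fib (2 * n) : ℤ) + (Nat.fib n : ℤ) ^ 2 * (Nat.fib (n + 1) : ℤ)
        - (Nat.fib n : ℤ) * (Nat.fib (n + 1) : ℤ) ^ 2
        + (Nat.fib (n + 1) : ℤ) ^ 3 - (Nat.fib (2 * n + 1) : ℤ)) ∧
    (2 * ∑ j ∈ Finset.range n, (Nat.fib j : ℤ) ^ 2 * (Nat.fib (2 * n + 1 - j) : ℤ)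
      = -(Nat.fib (2 * n) : ℤ) - (Nat.fib n : ℤ) ^ 3
        - (Nat.fib n : ℤ) ^ 2 * (Nat.fib (n + 1) : ℤ)
        + 3 * (Nat.fib n : ℤ) * (Nat.fib (n + 1) : ℤ) ^ 2) := by
  induction n with
  | zero => simp
  | succ n ih =>
    obtain ⟨hS, hT⟩ := ih
    have e1 : ∀ j ∈ Finset.range n,
        (Nat.fib j : ℤ) ^ 2 * (Nat.fib (2 * (n + 1) - j) : ℤ)
          = (Nat.fib j : ℤ) ^ 2 * (Nat.fib (2 * n + 1 - j) : ℤ)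
            + (Nat.fib j : ℤ) ^ 2 * (Nat.fib (2 * n - j) : ℤ) := by
      intro j hj
      have hj' : j < n := Finset.mem_range.mp hj
      have h2 : 2 * (n + 1) - j = (2 * n - j) + 2 := by omega
      have h1 : 2 * n + 1 - j = (2 * n - j) + 1 := by omega
      rw [h2, h1, Nat.fib_add_two]
      push_cast
      ring
    have e2 : ∀ j ∈ Finset.range n,
        (Nat.fib j : ℤ) ^ 2 * (Nat.fib (2 * (n + 1) + 1 - j) : ℤ)
          = (Nat.fib j : ℤ) ^ 2 * (Nat.fib (2 * (n + 1) - j) : ℤ)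
            + (Nat.fib j : ℤ) ^ 2 * (Nat.fib (2 * n + 1 - j) : ℤ) := by
      intro j hj
      have hj' : j < n := Finset.mem_range.mp hj
      have h3 : 2 * (n + 1) + 1 - j = (2 * n + 1 - j) + 2 := by omega
      have h2 : 2 * (n + 1) - j = (2 * n + 1 - j) + 1 := by omega
      rw [h3, h2, Nat.fib_add_two]
      push_cast
      ring
    have hSn : 2 * ∑ j ∈ Finset.range (n + 1),
        (Nat.fib j : ℤ) ^ 2 * (Nat.fib (2 * (n + 1) - j) : ℤ)
        = 2 * ∑ j ∈ Finset.range n, (Nat.fib j : ℤ) ^ 2 * (Nat.fib (2 * n + 1 - j) : ℤ)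
          + 2 * ∑ j ∈ Finset.range n, (Nat.fib j : ℤ) ^ 2 * (Nat.fib (2 * n - j) : ℤ)
          + 2 * (Nat.fib n : ℤ) ^ 2 * (Nat.fib (n + 2) : ℤ) := by
      rw [Finset.sum_range_succ, Finset.sum_congr rfl e1, Finset.sum_add_distrib]
      have : 2 * (n + 1) - n = n + 2 := by omega
      rw [this]; ring
    have hTn : 2 * ∑ j ∈ Finset.range (n + 1),
        (Nat.fib j : ℤ) ^ 2 * (Nat.fib (2 * (n + 1) + 1 - j) : ℤ)
        = 2 * ∑ j ∈ Finset.range n, (Nat.fib j : ℤ) ^ 2 * (Nat.fib (2 * (n + 1) - j) : ℤ)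
          + 2 * ∑ j ∈ Finset.range n, (Nat.fib j : ℤ) ^ 2 * (Nat.fib (2 * n + 1 - j) : ℤ)
          + 2 * (Nat.fib n : ℤ) ^ 2 * (Nat.fib (n + 3) : ℤ) := by
      rw [Finset.sum_range_succ, Finset.sum_congr rfl e2, Finset.sum_add_distrib]
      have : 2 * (n + 1) + 1 - n = n + 3 := by omega
      rw [this]; ring
    have f2n2 : (Nat.fib (2 * (n + 1)) : ℤ) = (Nat.fib (2 * n + 1) : ℤ) + (Nat.fib (2 * n) : ℤ) := by
      have : 2 * (n + 1) = (2 * n) + 2 := by ring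
      rw [this, Nat.fib_add_two]; push_cast; ring
    have f2n3 : (Nat.fib (2 * (n + 1) + 1) : ℤ)
        = (Nat.fib (2 * n) : ℤ) + 2 * (Nat.fib (2 * n + 1) : ℤ) := by
      have : 2 * (n + 1) + 1 = (2 * n + 1) + 2 := by ring
      rw [this, Nat.fib_add_two, Nat.fib_add_two]; push_cast; ring
    have fn2 : (Nat.fib (n + 2) : ℤ) = (Nat.fib (n + 1) : ℤ) + (Nat.fib n : ℤ) := by
      rw [Nat.fib_add_two]; push_cast; ring
    have fn3 : (Nat.fib (n + 3) : ℤ) = 2 * (Nat.fib (n + 1) : ℤ) + (Nat.fib n : ℤ) := by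
      rw [show n + 3 = (n + 1) + 2 from rfl, Nat.fib_add_two, Nat.fib_add_two]
      push_cast; ring
    have hSnew : 2 * ∑ j ∈ Finset.range (n + 1),
        (Nat.fib j : ℤ) ^ 2 * (Nat.fib (2 * (n + 1) - j) : ℤ)
        = (Nat.fib (2 * (n + 1)) : ℤ)
          + (Nat.fib (n + 1) : ℤ) ^ 2 * (Nat.fib (n + 1 + 1) : ℤ)
          - (Nat.fib (n + 1) : ℤ) * (Nat.fib (n + 1 + 1) : ℤ) ^ 2
          + (Nat.fib (n + 1 + 1) : ℤ) ^ 3 - (Nat.fib (2 * (n + 1) + 1) : ℤ) := by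
      rw [hSn, hS, hT, f2n2, f2n3, fn2]
      ring
    have hP : 2 * ∑ j ∈ Finset.range n,
        (Nat.fib j : ℤ) ^ 2 * (Nat.fib (2 * (n + 1) - j) : ℤ)
        = 2 * ∑ j ∈ Finset.range n, (Nat.fib j : ℤ) ^ 2 * (Nat.fib (2 * n + 1 - j) : ℤ)
          + 2 * ∑ j ∈ Finset.range n, (Nat.fib j : ℤ) ^ 2 * (Nat.fib (2 * n - j) : ℤ) := by
      rw [Finset.sum_congr rfl e1, Finset.sum_add_distrib]; ring
    refine ⟨hSnew, ?_⟩
    rw [hTn, hP, hS, hT, f2n2, fn2, fn3]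
    ring

/-- Identity (eq:coll2) of Section 3.1 of Greene–Wilf: the F-closed form of
`∑_{j<n} F(j)² F(2n-j)` for the Fibonacci numbers. -/
theorem fib_sum_closed_form (n : ℕ) :
    2 * ∑ j ∈ Finset.range n, (Nat.fib j : ℤ) ^ 2 * (Nat.fib (2 * n - j) : ℤ)
      = (Nat.fib (2 * n) : ℤ) + (Nat.fib n : ℤ) ^ 2 * (Nat.fib (n + 1) : ℤ)
        - (Nat.fib n : ℤ) * (Nat.fib (n + 1) : ℤ) ^ 2
        + (Nat.fib (n + 1) : ℤ) ^ 3 - (Nat.fib (2 * n + 1) : ℤ) :=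
  (fib_pair_sum n).1
end
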